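/- arXiv:2402.15017 — 6 statements merged into one kernel-verified Lean document; each statement's English description precedes it below -/
import Mathlib

section
/- Deterministic core of Theorem 3.1 (direct adaptation after contrastive pretraining): Assume τ < 1 and ν > 0, assume Φ has ν-diversity with respect to φ*_ζ and κ-consistency with respect to φ* and φ*_ζ, and let ε₀ ∈ ℝ. If φ̂ ∈ Φ satisfies L_con(φ̂) ≤ 2ε₀, then for all distinct target classes y₁, y₂ ∈ 𝒞₀: L_sup(y₁,y₂,φ̂) − L_sup(y₁,y₂,φ*) ≤ (1/ν)·[ (2ε₀ − τ·log 2)/(1−τ) − L_sup(φ*_ζ) ] + κ. -/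
open scoped BigOperators

/-- Logistic loss `ℓ(v) = log(1 + exp(-v))`. -/
noncomputable def ell (v : ℝ) : ℝ := Real.log (1 + Real.exp (-v))

/-- Standard inner product on `ℝ^d`. -/
noncomputable def dot {d : ℕ} (v w : Fin d → ℝ) : ℝ := ∑ i, v i * w i

/-- Population contrastive pretraining loss. -/
noncomputable def Lcon {Y X : Type*} [Fintype Y] [Fintype X] {d : ℕ}
    (η : Y → ℝ) (D : Y → X → ℝ) (φ : X → Fin d → ℝ) : ℝ :=
  ∑ y, ∑ yneg, η y * η yneg *
    ∑ x, ∑ xpos, ∑ xneg,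
      D y x * D y xpos * D yneg xneg *
        ell (dot (φ x) (fun i => φ xpos i - φ xneg i))

/-- Binary supervised task loss for the task with classes `y₁, y₂`. -/
noncomputable def Lsup {Y X : Type*} [Fintype X] {d : ℕ}
    (D : Y → X → ℝ) (y₁ y₂ : Y) (φ : X → Fin d → ℝ) : ℝ :=
  ⨅ w : Fin d → ℝ,
    (1 / 2) * ((∑ x, D y₁ x * ell (dot w (φ x))) +
      ∑ x, D y₂ x * ell (-(dot w (φ x))))

/-- Collision probability `τ = Σ_y η(y)²`. -/
noncomputable def tau {Y : Type*} [Fintype Y] (η : Y → ℝ) : ℝ := ∑ y, (η y) ^ 2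

/-- Task-averaged supervised loss (for `τ < 1`). -/
noncomputable def LsupAvg {Y X : Type*} [Fintype Y] [Fintype X] [DecidableEq Y] {d : ℕ}
    (η : Y → ℝ) (D : Y → X → ℝ) (φ : X → Fin d → ℝ) : ℝ :=
  (1 / (1 - tau η)) *
    ∑ y₁, ∑ y₂, if y₁ ≠ y₂ then η y₁ * η y₂ * Lsup D y₁ y₂ φ else 0

/-! ### Auxiliary lemmas -/

lemma ell_nonneg (v : ℝ) : 0 ≤ ell v :=
  Real.log_nonneg (by nlinarith [Real.exp_pos (-v)])

lemma ell_zero : ell 0 = Real.log 2 := by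
  simp [ell, Real.exp_zero]; norm_num

lemma ell_hasDerivAt (v : ℝ) :
    HasDerivAt ell (-Real.exp (-v) / (1 + Real.exp (-v))) v := by
  have h1 : HasDerivAt (fun v : ℝ => 1 + Real.exp (-v)) (-Real.exp (-v)) v := by
    have h := (Real.hasDerivAt_exp (-v)).comp v (hasDerivAt_neg v)
    simpa [mul_comm] using h.const_add 1
  have hne : (1 : ℝ) + Real.exp (-v) ≠ 0 := by positivity
  exact h1.log hne

lemma convexOn_ell : ConvexOn ℝ Set.univ ell := by
  have hdiff : Differentiable ℝ ell := fun v => (ell_hasDerivAt v).differentiableAt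
  apply Monotone.convexOn_univ_of_deriv hdiff
  intro a b hab
  rw [(ell_hasDerivAt a).deriv, (ell_hasDerivAt b).deriv]
  have ha : (0:ℝ) < 1 + Real.exp (-a) := by positivity
  have hb : (0:ℝ) < 1 + Real.exp (-b) := by positivity
  rw [div_le_div_iff₀ ha hb]
  have h : Real.exp (-b) ≤ Real.exp (-a) := Real.exp_le_exp.mpr (by linarith)
  nlinarith [Real.exp_pos (-a), Real.exp_pos (-b)]

lemma jensen_sub {X : Type*} [Fintype X] (p q g h : X → ℝ)
    (hp : ∀ x, 0 ≤ p x) (hq : ∀ x, 0 ≤ q x) (hp1 : ∑ x, p x = 1) (hq1 : ∑ x, q x = 1) :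
    ell ((∑ x, p x * g x) - ∑ x, q x * h x) ≤ ∑ u, ∑ v, p u * q v * ell (g u - h v) := by
  have key := convexOn_ell.map_sum_le (t := (Finset.univ : Finset (X × X)))
    (w := fun z => p z.1 * q z.2) (p := fun z => g z.1 - h z.2)
    (fun z _ => mul_nonneg (hp _) (hq _))
    (by rw [Fintype.sum_prod_type]
        simp only [← Finset.mul_sum, hq1, mul_one, hp1])
    (fun z _ => trivial)
  rw [Fintype.sum_prod_type, Fintype.sum_prod_type] at key
  have hpt : ∑ u, ∑ v, (p u * q v) • (g u - h v)
      = (∑ x, p x * g x) - ∑ x, q x * h x := by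
    have expand : ∀ u v : X, (p u * q v) • (g u - h v)
        = p u * g u * q v - p u * (q v * h v) := by
      intro u v; simp [smul_eq_mul]; ring
    simp only [expand, Finset.sum_sub_distrib, ← Finset.mul_sum, ← Finset.sum_mul, hq1, hp1,
      mul_one, one_mul]
  rw [hpt] at key
  simpa [smul_eq_mul] using key

lemma dot_sub {d : ℕ} (v a b : Fin d → ℝ) :
    dot v (fun i => a i - b i) = dot v a - dot v b := by
  simp [dot, mul_sub, Finset.sum_sub_distrib]

lemma dot_sub' {d : ℕ} (v a b : Fin d → ℝ) :
    dot (fun i => a i - b i) v = dot a v - dot b v := by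
  simp [dot, sub_mul, Finset.sum_sub_distrib]

lemma dot_mu {X : Type*} [Fintype X] {d : ℕ} (D : X → ℝ) (φ : X → Fin d → ℝ) (x : X) :
    dot (fun i => ∑ u, D u * φ u i) (φ x) = ∑ u, D u * dot (φ x) (φ u) := by
  simp only [dot, Finset.sum_mul, Finset.mul_sum]
  rw [Finset.sum_comm]
  exact Finset.sum_congr rfl fun u _ => Finset.sum_congr rfl fun i _ => by ring

lemma Lsup_le {Y X : Type*} [Fintype X] {d : ℕ} (D : Y → X → ℝ) (hD0 : ∀ y x, 0 ≤ D y x)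
    (y₁ y₂ : Y) (φ : X → Fin d → ℝ) (w : Fin d → ℝ) :
    Lsup D y₁ y₂ φ ≤ (1 / 2) * ((∑ x, D y₁ x * ell (dot w (φ x))) +
      ∑ x, D y₂ x * ell (-(dot w (φ x)))) := by
  apply ciInf_le
  refine ⟨0, ?_⟩
  rintro _ ⟨w', rfl⟩
  have h1 : 0 ≤ ∑ x, D y₁ x * ell (dot w' (φ x)) :=
    Finset.sum_nonneg fun x _ => mul_nonneg (hD0 _ _) (ell_nonneg _)
  have h2 : 0 ≤ ∑ x, D y₂ x * ell (-(dot w' (φ x))) :=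
    Finset.sum_nonneg fun x _ => mul_nonneg (hD0 _ _) (ell_nonneg _)
  dsimp
  linarith

lemma Lcon_ge {Y X : Type*} [Fintype Y] [Fintype X] [DecidableEq Y] {d : ℕ}
    (η : Y → ℝ) (hη0 : ∀ y, 0 ≤ η y)
    (D : Y → X → ℝ) (hD0 : ∀ y x, 0 ≤ D y x) (hD1 : ∀ y, ∑ x, D y x = 1)
    (φ : X → Fin d → ℝ) :
    tau η * Real.log 2 +
      (∑ y₁, ∑ y₂, if y₁ ≠ y₂ then η y₁ * η y₂ * Lsup D y₁ y₂ φ else 0) ≤ Lcon η D φ := by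
  set m : Y → X → ℝ := fun y x => ∑ u, D y u * dot (φ x) (φ u) with hm
  set B : Y → Y → ℝ := fun y₁ y₂ => ∑ x, D y₁ x * ell (m y₁ x - m y₂ x) with hB
  -- Step 1: Lcon ≥ ∑∑ ηη B, by Jensen's inequality per (y₁, y₂, x)
  have step1 : (∑ y₁, ∑ y₂, η y₁ * η y₂ * B y₁ y₂) ≤ Lcon η D φ := by
    unfold Lcon
    refine Finset.sum_le_sum fun y₁ _ => Finset.sum_le_sum fun y₂ _ => ?_
    refine mul_le_mul_of_nonneg_left ?_ (mul_nonneg (hη0 _) (hη0 _))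
    have hrw : ∀ x : X, (∑ xpos, ∑ xneg, D y₁ x * D y₁ xpos * D y₂ xneg *
          ell (dot (φ x) (fun i => φ xpos i - φ xneg i)))
        = D y₁ x * ∑ xpos, ∑ xneg, D y₁ xpos * D y₂ xneg *
            ell (dot (φ x) (φ xpos) - dot (φ x) (φ xneg)) := by
      intro x
      simp only [dot_sub, Finset.mul_sum]
      exact Finset.sum_congr rfl fun u _ => Finset.sum_congr rfl fun v _ => by ring
    simp only [hrw]
    refine Finset.sum_le_sum fun x _ => mul_le_mul_of_nonneg_left ?_ (hD0 _ _)
    exact jensen_sub (D y₁) (D y₂) (fun u => dot (φ x) (φ u)) (fun v => dot (φ x) (φ v))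
      (hD0 _) (hD0 _) (hD1 _) (hD1 _)
  -- Step 2: split ∑∑ ηη B into diagonal (= τ log 2) and off-diagonal parts
  have split : (∑ y₁, ∑ y₂, η y₁ * η y₂ * B y₁ y₂)
      = tau η * Real.log 2 + ∑ y₁, ∑ y₂, if y₁ ≠ y₂ then η y₁ * η y₂ * B y₁ y₂ else 0 := by
    have hdiag : ∀ y : Y, B y y = Real.log 2 := by
      intro y
      simp only [hB, sub_self, ell_zero, ← Finset.sum_mul, hD1 y, one_mul]
    have e : (∑ y₁, ∑ y₂, η y₁ * η y₂ * B y₁ y₂)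
        = (∑ y₁, ∑ y₂, if y₁ = y₂ then η y₁ * η y₂ * B y₁ y₂ else 0)
          + ∑ y₁, ∑ y₂, if y₁ ≠ y₂ then η y₁ * η y₂ * B y₁ y₂ else 0 := by
      rw [← Finset.sum_add_distrib]
      refine Finset.sum_congr rfl fun y₁ _ => ?_
      rw [← Finset.sum_add_distrib]
      refine Finset.sum_congr rfl fun y₂ _ => ?_
      by_cases h : y₁ = y₂ <;> simp [h]
    rw [e]
    congr 1
    rw [tau, Finset.sum_mul]
    refine Finset.sum_congr rfl fun y _ => ?_
    simp [Finset.sum_ite_eq, hdiag y, sq]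
  -- Step 3: off-diagonal ηηB dominates ηη Lsup after symmetrization
  have step3 : (∑ y₁, ∑ y₂, if y₁ ≠ y₂ then η y₁ * η y₂ * Lsup D y₁ y₂ φ else 0)
      ≤ ∑ y₁, ∑ y₂, if y₁ ≠ y₂ then η y₁ * η y₂ * B y₁ y₂ else 0 := by
    have hLsup : ∀ y₁ y₂ : Y, Lsup D y₁ y₂ φ ≤ (1 / 2) * (B y₁ y₂ + B y₂ y₁) := by
      intro y₁ y₂
      set w : Fin d → ℝ := fun i => (∑ u, D y₁ u * φ u i) - ∑ u, D y₂ u * φ u i with hw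
      have hdw : ∀ x : X, dot w (φ x) = m y₁ x - m y₂ x := by
        intro x
        have := dot_sub' (φ x) (fun i => ∑ u, D y₁ u * φ u i) (fun i => ∑ u, D y₂ u * φ u i)
        simp only [hw]
        rw [this, dot_mu, dot_mu]
      have h := Lsup_le D hD0 y₁ y₂ φ w
      have e1 : (∑ x, D y₁ x * ell (dot w (φ x))) = B y₁ y₂ := by
        refine Finset.sum_congr rfl fun x _ => ?_
        rw [hdw x]
      have e2 : (∑ x, D y₂ x * ell (-(dot w (φ x)))) = B y₂ y₁ := by
        refine Finset.sum_congr rfl fun x _ => ?_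
        rw [hdw x, neg_sub]
      rw [e1, e2] at h
      exact h
    have hswap : (∑ y₁, ∑ y₂, if y₁ ≠ y₂ then η y₁ * η y₂ * B y₁ y₂ else 0)
        = ∑ y₁, ∑ y₂, if y₁ ≠ y₂ then η y₁ * η y₂ * B y₂ y₁ else 0 := by
      rw [Finset.sum_comm]
      refine Finset.sum_congr rfl fun y₁ _ => Finset.sum_congr rfl fun y₂ _ => ?_
      by_cases h : y₁ = y₂ <;> simp [h, Ne.symm, eq_comm, mul_comm]
    have key : (∑ y₁, ∑ y₂, if y₁ ≠ y₂ then 2 * (η y₁ * η y₂ * Lsup D y₁ y₂ φ) else 0)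
        ≤ ∑ y₁, ∑ y₂, if y₁ ≠ y₂ then η y₁ * η y₂ * B y₁ y₂ + η y₁ * η y₂ * B y₂ y₁ else 0 := by
      refine Finset.sum_le_sum fun y₁ _ => Finset.sum_le_sum fun y₂ _ => ?_
      by_cases h : y₁ = y₂
      · simp [h]
      · simp only [h, ne_eq, not_false_iff, if_true]
        have := hLsup y₁ y₂
        nlinarith [mul_nonneg (hη0 y₁) (hη0 y₂)]
    have exp1 : (∑ y₁, ∑ y₂, if y₁ ≠ y₂ then η y₁ * η y₂ * B y₁ y₂ + η y₁ * η y₂ * B y₂ y₁ else 0)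
        = (∑ y₁, ∑ y₂, if y₁ ≠ y₂ then η y₁ * η y₂ * B y₁ y₂ else 0)
          + (∑ y₁, ∑ y₂, if y₁ ≠ y₂ then η y₁ * η y₂ * B y₂ y₁ else 0) := by
      rw [← Finset.sum_add_distrib]
      refine Finset.sum_congr rfl fun y₁ _ => ?_
      rw [← Finset.sum_add_distrib]
      refine Finset.sum_congr rfl fun y₂ _ => ?_
      by_cases h : y₁ = y₂ <;> simp [h]
    have exp2 : (∑ y₁, ∑ y₂, if y₁ ≠ y₂ then 2 * (η y₁ * η y₂ * Lsup D y₁ y₂ φ) else 0)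
        = 2 * ∑ y₁, ∑ y₂, if y₁ ≠ y₂ then η y₁ * η y₂ * Lsup D y₁ y₂ φ else 0 := by
      simp [Finset.mul_sum, mul_ite]
    rw [exp1, ← hswap, exp2] at key
    linarith
  rw [split] at step1
  linarith

/-- Deterministic core of Theorem 3.1: direct adaptation after contrastive pretraining. -/
theorem direct_adaptation_after_contrastive_pretraining
    {Y X : Type*} [Fintype Y] [Fintype X] [DecidableEq Y] [Nonempty X]
    (hY : 2 ≤ Fintype.card Y)
    (η : Y → ℝ) (hη0 : ∀ y, 0 ≤ η y) (hη1 : ∑ y, η y = 1)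
    (D : Y → X → ℝ) (hD0 : ∀ y x, 0 ≤ D y x) (hD1 : ∀ y, ∑ x, D y x = 1)
    {d : ℕ} (hd : 1 ≤ d)
    (C₀ : Set Y) (Φ : Set (X → Fin d → ℝ))
    (φstar φζ : X → Fin d → ℝ)
    (ν κ ε₀ : ℝ) (hτ : tau η < 1) (hν : 0 < ν)
    -- ν-diversity of Φ with respect to φζ
    (hdiv : ∀ φ ∈ Φ, ∀ y₁ ∈ C₀, ∀ y₂ ∈ C₀, y₁ ≠ y₂ →
      |Lsup D y₁ y₂ φ - Lsup D y₁ y₂ φζ| ≤ (LsupAvg η D φ - LsupAvg η D φζ) / ν)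
    -- κ-consistency of Φ with respect to φstar and φζ
    (hcons : ∀ y₁ ∈ C₀, ∀ y₂ ∈ C₀, y₁ ≠ y₂ →
      Lsup D y₁ y₂ φζ - Lsup D y₁ y₂ φstar ≤ κ)
    (φhat : X → Fin d → ℝ) (hΦ : φhat ∈ Φ)
    (hpre : Lcon η D φhat ≤ 2 * ε₀) :
    ∀ y₁ ∈ C₀, ∀ y₂ ∈ C₀, y₁ ≠ y₂ →
      Lsup D y₁ y₂ φhat - Lsup D y₁ y₂ φstar ≤
        (1 / ν) * ((2 * ε₀ - tau η * Real.log 2) / (1 - tau η) - LsupAvg η D φζ) + κ := by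
  intro y₁ hy₁ y₂ hy₂ hne
  have hτ' : (0:ℝ) < 1 - tau η := by linarith
  have hkey := Lcon_ge η hη0 D hD0 hD1 φhat
  have hS_le : (∑ a, ∑ b, if a ≠ b then η a * η b * Lsup D a b φhat else 0)
      ≤ 2 * ε₀ - tau η * Real.log 2 := by linarith
  have hAvg : LsupAvg η D φhat ≤ (2 * ε₀ - tau η * Real.log 2) / (1 - tau η) := by
    have e : (2 * ε₀ - tau η * Real.log 2) / (1 - tau η)
        = (1 / (1 - tau η)) * (2 * ε₀ - tau η * Real.log 2) := by ring
    rw [LsupAvg, e]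
    exact mul_le_mul_of_nonneg_left hS_le (by positivity)
  have h1 : Lsup D y₁ y₂ φhat - Lsup D y₁ y₂ φζ
      ≤ (LsupAvg η D φhat - LsupAvg η D φζ) / ν :=
    le_trans (le_abs_self _) (hdiv φhat hΦ y₁ hy₁ y₂ hy₂ hne)
  have h2 := hcons y₁ hy₁ y₂ hy₂ hne
  have h3 : (LsupAvg η D φhat - LsupAvg η D φζ) / ν
      ≤ ((2 * ε₀ - tau η * Real.log 2) / (1 - tau η) - LsupAvg η D φζ) / ν := by
    apply div_le_div_of_nonneg_right ?_ hν.le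
    linarith
  have h4 : (1 / ν) * ((2 * ε₀ - tau η * Real.log 2) / (1 - tau η) - LsupAvg η D φζ)
      = ((2 * ε₀ - tau η * Real.log 2) / (1 - tau η) - LsupAvg η D φζ) / ν := by ring
  rw [h4]
  linarith
end

section
/- Lemma B.6 (supervised pretraining loss controls the task-averaged supervised loss, discrete form, binary downstream tasks): Assume τ < 1 and 0 < l ≤ η(y) ≤ u for all y ∈ 𝒴. Then for every representation φ : X → ℝ^d: L_sup(φ) ≤ (u/l)²·L_sup-pre(φ). (This is the r = 2 case of the paper's Lemma B.6, which states L_sup(φ) ≤ (u/l)^r·L_sup-pre(φ) for r-way tasks.) -/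
open scoped BigOperators

/-- Population supervised pretraining (cross-entropy) loss. -/
noncomputable def LsupPre {Y X : Type*} [Fintype Y] [Fintype X] {d : ℕ}
    (η : Y → ℝ) (D : Y → X → ℝ) (φ : X → Fin d → ℝ) : ℝ :=
  ⨅ W : Y → Fin d → ℝ,
    ∑ y, η y * ∑ x, D y x *
      Real.log ((∑ y', Real.exp (dot (W y') (φ x))) / Real.exp (dot (W y) (φ x)))

lemma dot_sub_s4 {d : ℕ} (w₁ w₂ v : Fin d → ℝ) : dot (w₁ - w₂) v = dot w₁ v - dot w₂ v := by
  simp [dot, sub_mul, Finset.sum_sub_distrib]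

lemma ell_sub_eq (a b : ℝ) : ell (a - b) = Real.log ((Real.exp a + Real.exp b) / Real.exp a) := by
  have h : (Real.exp a + Real.exp b) / Real.exp a = 1 + Real.exp (-(a - b)) := by
    rw [neg_sub, Real.exp_sub]
    field_simp
  rw [ell, h]

lemma ell_le_log (a b S : ℝ) (hS : Real.exp a + Real.exp b ≤ S) :
    ell (a - b) ≤ Real.log (S / Real.exp a) := by
  rw [ell_sub_eq]
  gcongr

lemma sum_ite_ne {Y : Type*} [Fintype Y] [DecidableEq Y] (y₁ : Y) (f : Y → ℝ) :
    ∑ y₂, (if y₁ ≠ y₂ then f y₂ else 0) = (∑ y, f y) - f y₁ := by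
  have h : ∀ y₂, (if y₁ ≠ y₂ then f y₂ else 0) = f y₂ - (if y₂ = y₁ then f y₂ else 0) := by
    intro y₂
    by_cases h : y₂ = y₁
    · simp [h]
    · rw [if_pos (Ne.symm h), if_neg h, sub_zero]
  rw [Finset.sum_congr rfl (fun y₂ _ => h y₂), Finset.sum_sub_distrib,
    Finset.sum_ite_eq' Finset.univ y₁ f]
  simp

/-- Per-class cross-entropy loss of the softmax classifier `W` on the data of class `y`. -/
noncomputable def ceA {Y X : Type*} [Fintype Y] [Fintype X] {d : ℕ}
    (D : Y → X → ℝ) (φ : X → Fin d → ℝ) (W : Y → Fin d → ℝ) (y : Y) : ℝ :=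
  ∑ x, D y x * Real.log ((∑ y', Real.exp (dot (W y') (φ x))) / Real.exp (dot (W y) (φ x)))

lemma LsupPre_eq {Y X : Type*} [Fintype Y] [Fintype X] {d : ℕ}
    (η : Y → ℝ) (D : Y → X → ℝ) (φ : X → Fin d → ℝ) :
    LsupPre η D φ = ⨅ W : Y → Fin d → ℝ, ∑ y, η y * ceA D φ W y := rfl

set_option maxHeartbeats 1000000 in
/-- Lemma B.6 (binary downstream tasks): the supervised pretraining loss controls
the task-averaged supervised loss. -/
theorem supervised_pretraining_controls_supervised_loss
    {Y X : Type*} [Fintype Y] [Fintype X] [DecidableEq Y] [Nonempty X]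
    (hY : 2 ≤ Fintype.card Y)
    (η : Y → ℝ) (hη1 : ∑ y, η y = 1)
    (l u : ℝ) (hl : 0 < l) (hηl : ∀ y, l ≤ η y) (hηu : ∀ y, η y ≤ u)
    (D : Y → X → ℝ) (hD0 : ∀ y x, 0 ≤ D y x) (hD1 : ∀ y, ∑ x, D y x = 1)
    {d : ℕ} (hd : 1 ≤ d)
    (hτ : tau η < 1)
    (φ : X → Fin d → ℝ) :
    LsupAvg η D φ ≤ (u / l) ^ 2 * LsupPre η D φ := by
  classical
  have hηpos : ∀ y, 0 < η y := fun y => lt_of_lt_of_le hl (hηl y)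
  have hη_le_one : ∀ y, η y ≤ 1 := by
    intro y
    have h := Finset.single_le_sum (f := η) (fun y' _ => (hηpos y').le) (Finset.mem_univ y)
    rwa [hη1] at h
  obtain ⟨y₀⟩ : Nonempty Y := Fintype.card_pos_iff.mp (by omega)
  have hlu : l ≤ u := le_trans (hηl y₀) (hηu y₀)
  have hu : 0 < u := lt_of_lt_of_le hl hlu
  have hul : 1 ≤ u / l := (one_le_div hl).mpr hlu
  have hτ' : 0 < 1 - tau η := by linarith
  -- nonnegativity of the cross-entropy terms
  have hCE : ∀ (W : Y → Fin d → ℝ) (y : Y) (x : X),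
      0 ≤ Real.log ((∑ y', Real.exp (dot (W y') (φ x))) / Real.exp (dot (W y) (φ x))) := by
    intro W y x
    apply Real.log_nonneg
    rw [le_div_iff₀ (Real.exp_pos _), one_mul]
    exact Finset.single_le_sum (f := fun y' => Real.exp (dot (W y') (φ x)))
      (fun y' _ => (Real.exp_pos _).le) (Finset.mem_univ y)
  have hA0 : ∀ (W : Y → Fin d → ℝ) (y : Y), 0 ≤ ceA D φ W y := fun W y =>
    Finset.sum_nonneg fun x _ => mul_nonneg (hD0 y x) (hCE W y x)
  -- the pair bound: plug in w = W y₁ - W y₂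
  have hpair : ∀ (W : Y → Fin d → ℝ) (y₁ y₂ : Y), y₁ ≠ y₂ →
      Lsup D y₁ y₂ φ ≤ (1 / 2) * (ceA D φ W y₁ + ceA D φ W y₂) := by
    intro W y₁ y₂ hne
    have hbdd : BddBelow (Set.range fun w : Fin d → ℝ =>
        (1 / 2) * ((∑ x, D y₁ x * ell (dot w (φ x))) +
          ∑ x, D y₂ x * ell (-(dot w (φ x))))) := by
      refine ⟨0, ?_⟩
      rintro v ⟨w, rfl⟩
      have h1 : 0 ≤ ∑ x, D y₁ x * ell (dot w (φ x)) :=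
        Finset.sum_nonneg fun x _ => mul_nonneg (hD0 _ _) (ell_nonneg _)
      have h2 : 0 ≤ ∑ x, D y₂ x * ell (-(dot w (φ x))) :=
        Finset.sum_nonneg fun x _ => mul_nonneg (hD0 _ _) (ell_nonneg _)
      simp only
      linarith
    have key : ∀ x : X,
        ell (dot (W y₁ - W y₂) (φ x)) ≤
          Real.log ((∑ y', Real.exp (dot (W y') (φ x))) / Real.exp (dot (W y₁) (φ x))) ∧
        ell (-(dot (W y₁ - W y₂) (φ x))) ≤
          Real.log ((∑ y', Real.exp (dot (W y') (φ x))) / Real.exp (dot (W y₂) (φ x))) := by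
      intro x
      have hS : Real.exp (dot (W y₁) (φ x)) + Real.exp (dot (W y₂) (φ x)) ≤
          ∑ y', Real.exp (dot (W y') (φ x)) := by
        have hsub := Finset.sum_le_sum_of_subset_of_nonneg
          (f := fun y => Real.exp (dot (W y) (φ x)))
          (Finset.subset_univ ({y₁, y₂} : Finset Y))
          (fun _ _ _ => (Real.exp_pos _).le)
        rwa [Finset.sum_pair hne] at hsub
      constructor
      · rw [dot_sub_s4]
        exact ell_le_log _ _ _ hS
      · rw [dot_sub_s4, neg_sub]
        exact ell_le_log _ _ _ (by linarith)
    have step : (1 / 2 : ℝ) * ((∑ x, D y₁ x * ell (dot (W y₁ - W y₂) (φ x))) +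
          ∑ x, D y₂ x * ell (-(dot (W y₁ - W y₂) (φ x))))
        ≤ (1 / 2) * (ceA D φ W y₁ + ceA D φ W y₂) :=
      mul_le_mul_of_nonneg_left (add_le_add
        (Finset.sum_le_sum fun x _ => mul_le_mul_of_nonneg_left (key x).1 (hD0 y₁ x))
        (Finset.sum_le_sum fun x _ => mul_le_mul_of_nonneg_left (key x).2 (hD0 y₂ x)))
        (by norm_num)
    exact le_trans (ciInf_le hbdd (W y₁ - W y₂)) step
  -- coefficient comparison
  have hsum1 : ∑ y : Y, (1 - η y) = (Fintype.card Y : ℝ) - 1 := by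
    rw [Finset.sum_sub_distrib, hη1]
    simp [Finset.card_univ]
  have htau_eq : 1 - tau η = ∑ y, η y * (1 - η y) := by
    unfold tau
    have h : ∑ y, η y * (1 - η y) = (∑ y, η y) - ∑ y, (η y) ^ 2 := by
      rw [← Finset.sum_sub_distrib]
      exact Finset.sum_congr rfl fun y _ => by ring
    rw [h, hη1]
  have hlow : ((Fintype.card Y : ℝ) - 1) * l ≤ 1 - tau η := by
    rw [htau_eq, ← hsum1, Finset.sum_mul]
    refine Finset.sum_le_sum fun y _ => ?_
    nlinarith [hηl y, hη_le_one y, hl]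
  have hup : ∀ y, 1 - η y ≤ ((Fintype.card Y : ℝ) - 1) * u := by
    intro y
    have h := Finset.sum_le_card_nsmul (Finset.univ.erase y) η u (fun y' _ => hηu y')
    rw [Finset.sum_erase_eq_sub (Finset.mem_univ y), hη1,
      Finset.card_erase_of_mem (Finset.mem_univ y), Finset.card_univ, nsmul_eq_mul,
      Nat.cast_sub (by omega), Nat.cast_one] at h
    exact h
  have hcoef : ∀ y, 1 - η y ≤ (u / l) * (1 - tau η) := by
    intro y
    have heq : ((Fintype.card Y : ℝ) - 1) * u = (u / l) * (((Fintype.card Y : ℝ) - 1) * l) := by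
      field_simp
    calc 1 - η y ≤ ((Fintype.card Y : ℝ) - 1) * u := hup y
      _ = (u / l) * (((Fintype.card Y : ℝ) - 1) * l) := heq
      _ ≤ (u / l) * (1 - tau η) := mul_le_mul_of_nonneg_left hlow (by positivity)
  -- main bound for a fixed classifier W
  have hmain : ∀ W : Y → Fin d → ℝ,
      LsupAvg η D φ ≤ (u / l) ^ 2 * (∑ y, η y * ceA D φ W y) := by
    intro W
    set S : ℝ := ∑ y, η y * ceA D φ W y with hSdef
    have hSnn : 0 ≤ S :=
      Finset.sum_nonneg fun y _ => mul_nonneg (hηpos y).le (hA0 W y)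
    have h1 : (∑ y₁, ∑ y₂, if y₁ ≠ y₂ then η y₁ * η y₂ * Lsup D y₁ y₂ φ else 0)
        ≤ ∑ y₁, ∑ y₂, if y₁ ≠ y₂ then
            η y₁ * η y₂ * ((1 / 2) * (ceA D φ W y₁ + ceA D φ W y₂)) else 0 := by
      refine Finset.sum_le_sum fun y₁ _ => Finset.sum_le_sum fun y₂ _ => ?_
      by_cases h : y₁ ≠ y₂
      · simp only [if_pos h]
        exact mul_le_mul_of_nonneg_left (hpair W y₁ y₂ h)
          (mul_nonneg (hηpos y₁).le (hηpos y₂).le)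
      · simp [h]
    have h2 : (∑ y₁, ∑ y₂, if y₁ ≠ y₂ then
            η y₁ * η y₂ * ((1 / 2) * (ceA D φ W y₁ + ceA D φ W y₂)) else 0)
        = ∑ y, η y * (1 - η y) * ceA D φ W y := by
      have key : ∀ y₁ : Y, (∑ y₂, if y₁ ≠ y₂ then
            η y₁ * η y₂ * ((1 / 2) * (ceA D φ W y₁ + ceA D φ W y₂)) else 0)
          = η y₁ * (1 / 2) * ceA D φ W y₁ + η y₁ * ((1 / 2) * S) -
            η y₁ * η y₁ * ceA D φ W y₁ := by
        intro y₁
        rw [sum_ite_ne y₁ (fun y₂ => η y₁ * η y₂ * ((1 / 2) * (ceA D φ W y₁ + ceA D φ W y₂)))]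
        have e1 : ∑ y₂, η y₁ * η y₂ * ((1 / 2) * (ceA D φ W y₁ + ceA D φ W y₂))
            = η y₁ * (1 / 2) * ceA D φ W y₁ * (∑ y₂, η y₂) +
              η y₁ * (1 / 2) * (∑ y₂, η y₂ * ceA D φ W y₂) := by
          rw [Finset.mul_sum, Finset.mul_sum, ← Finset.sum_add_distrib]
          exact Finset.sum_congr rfl fun y₂ _ => by ring
        rw [e1, hη1, ← hSdef]
        ring
      rw [Finset.sum_congr rfl fun y₁ _ => key y₁, Finset.sum_sub_distrib,
        Finset.sum_add_distrib]
      have e2 : ∑ y, η y * ((1 / 2) * S) = (1 / 2) * S := by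
        rw [← Finset.sum_mul, hη1, one_mul]
      have e3 : ∑ y, η y * (1 / 2) * ceA D φ W y = (1 / 2) * S := by
        rw [hSdef, Finset.mul_sum]
        exact Finset.sum_congr rfl fun y _ => by ring
      have e4 : ∑ y, η y * (1 - η y) * ceA D φ W y
          = S - ∑ y, η y * η y * ceA D φ W y := by
        rw [hSdef, ← Finset.sum_sub_distrib]
        exact Finset.sum_congr rfl fun y _ => by ring
      rw [e2, e3, e4]
      ring
    have h3 : ∑ y, η y * (1 - η y) * ceA D φ W y ≤ ((u / l) * (1 - tau η)) * S := by
      rw [hSdef, Finset.mul_sum]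
      refine Finset.sum_le_sum fun y _ => ?_
      have hc := hcoef y
      have hA := hA0 W y
      have hη := (hηpos y).le
      nlinarith [mul_nonneg hη hA]
    have hfrac : 0 ≤ 1 / (1 - tau η) := by positivity
    unfold LsupAvg
    refine le_trans (mul_le_mul_of_nonneg_left (le_trans h1 (h2 ▸ h3)) hfrac) ?_
    have heq2 : (1 / (1 - tau η)) * (((u / l) * (1 - tau η)) * S) = (u / l) * S := by
      field_simp
    rw [heq2]
    nlinarith [mul_nonneg (mul_nonneg
      (by linarith : (0:ℝ) ≤ u / l - 1) (by positivity : (0:ℝ) ≤ u / l)) hSnn]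
  -- conclude by taking the infimum over W
  have hc : (0 : ℝ) < (u / l) ^ 2 := by positivity
  rw [LsupPre_eq]
  have hle : LsupAvg η D φ / (u / l) ^ 2 ≤
      ⨅ W : Y → Fin d → ℝ, ∑ y, η y * ceA D φ W y :=
    le_ciInf fun W => (div_le_iff₀' hc).mpr (hmain W)
  exact (div_le_iff₀' hc).mp hle
end

section
/- Lemma D.1 (optimality of the uniform singular-value profile): If ζ is exchangeable, then for every λ ∈ ℝ^k with Σ_i λ_i² ≤ R², F(λ) ≤ F(λ*), where λ* ∈ ℝ^k is the uniform vector with λ*_i = R/√k for all i. In particular, the uniform profile maximizes F over the Euclidean ball of radius R. -/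
/-!
By exchangeability, `F` is unchanged when the coordinates of `λ` are permuted, so `F(λ)` equals
its average over all relabellings `λ ∘ σ`. For a fixed pair `(z, z')`, Cauchy–Schwarz (concavity
of `√`) bounds the average of `√(Σᵢ λ_{σ i}² cᵢ)` by the square root of the averaged radicand,
in which every `λᵢ²` has become the mean `‖λ‖²/k ≤ R²/k`: that is the term of the uniform profile.
-/

open scoped BigOperators

/-- Objective `F(λ) = Σ_{(z,z')} ζ(z,z')·√(Σ_i λ_i²·1[z_i ≠ z'_i])`, where points of
`{−1,+1}^k` are encoded as `Fin k → Bool`. -/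
noncomputable def F {k : ℕ} (ζ : ((Fin k → Bool) × (Fin k → Bool)) → ℝ)
    (lam : Fin k → ℝ) : ℝ :=
  ∑ p : (Fin k → Bool) × (Fin k → Bool),
    ζ p * Real.sqrt (∑ i, (lam i) ^ 2 * (if p.1 i ≠ p.2 i then 1 else 0))

/-- `ζ` is exchangeable: invariant under simultaneous coordinate permutations. -/
def Exchangeable {k : ℕ} (ζ : ((Fin k → Bool) × (Fin k → Bool)) → ℝ) : Prop :=
  ∀ σ : Equiv.Perm (Fin k), ∀ p : (Fin k → Bool) × (Fin k → Bool),
    ζ (p.1 ∘ σ, p.2 ∘ σ) = ζ p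

open Finset Equiv

lemma Real.sum_sqrt_le_sqrt_card_mul_sum {ι : Type*} (s : Finset ι) {f : ι → ℝ}
    (hf : ∀ i, 0 ≤ f i) : ∑ i ∈ s, √(f i) ≤ √(#s * ∑ i ∈ s, f i) := by
  simpa [mul_comm, Real.sqrt_mul'] using Real.sum_sqrt_mul_sqrt_le s hf (fun _ => zero_le_one)

section PermAverage

variable {α : Type*} [Fintype α] [DecidableEq α]

lemma sum_perm_apply_eq {M : Type*} [AddCommMonoid M] (f : α → M) (i j : α) :
    ∑ σ : Perm α, f (σ i) = ∑ σ : Perm α, f (σ j) := by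
  simpa using (Equiv.sum_comp (Equiv.mulRight (swap i j)) fun σ : Perm α => f (σ i)).symm

lemma card_nsmul_sum_perm_apply {M : Type*} [AddCommMonoid M] (f : α → M) (i : α) :
    Fintype.card α • ∑ σ : Perm α, f (σ i) = Fintype.card (Perm α) • ∑ j, f j := by
  calc Fintype.card α • ∑ σ : Perm α, f (σ i) = ∑ j, ∑ σ : Perm α, f (σ j) := by
        simp [sum_perm_apply_eq f _ i]
    _ = ∑ σ : Perm α, ∑ j, f (σ j) := sum_comm
    _ = Fintype.card (Perm α) • ∑ j, f j := by simp [Equiv.sum_comp]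

lemma sum_perm_apply_eq_mul_sum (f : α → ℝ) (i : α) :
    ∑ σ : Perm α, f (σ i) = Fintype.card (Perm α) / Fintype.card α * ∑ j, f j := by
  have hα : (Fintype.card α : ℝ) ≠ 0 := by
    exact_mod_cast (Fintype.card_pos_iff.2 ⟨i⟩).ne'
  have := card_nsmul_sum_perm_apply f i
  simp only [nsmul_eq_mul] at this
  field_simp
  linarith

end PermAverage

lemma sum_perm_sqrt_le {ι : Type*} [Fintype ι] [DecidableEq ι] {lam c : ι → ℝ} {r : ℝ}
    (hc : ∀ i, 0 ≤ c i) (hlam : ∑ i, lam i ^ 2 ≤ r ^ 2) :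
    ∑ σ : Perm ι, √(∑ i, lam (σ i) ^ 2 * c i)
      ≤ Fintype.card (Perm ι) * √(∑ i, (r / √(Fintype.card ι)) ^ 2 * c i) := by
  set n : ℝ := (Fintype.card (Perm ι) : ℝ)
  set Y := ∑ i, (r / √(Fintype.card ι)) ^ 2 * c i
  have hsum : ∑ σ : Perm ι, ∑ i, lam (σ i) ^ 2 * c i ≤ n * Y := by
    rw [sum_comm, mul_sum]
    gcongr with i
    have := hc i
    calc ∑ σ : Perm ι, lam (σ i) ^ 2 * c i = n / Fintype.card ι * (∑ j, lam j ^ 2) * c i := by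
          rw [← sum_mul, sum_perm_apply_eq_mul_sum (fun j => lam j ^ 2)]
      _ ≤ n / Fintype.card ι * r ^ 2 * c i := by gcongr
      _ = n * ((r / √(Fintype.card ι)) ^ 2 * c i) := by
          rw [div_pow, Real.sq_sqrt (Nat.cast_nonneg _)]
          ring
  calc ∑ σ : Perm ι, √(∑ i, lam (σ i) ^ 2 * c i)
      ≤ √(n * ∑ σ : Perm ι, ∑ i, lam (σ i) ^ 2 * c i) := by
        simpa only [card_univ] using Real.sum_sqrt_le_sqrt_card_mul_sum univ
          (f := fun σ : Perm ι => ∑ i, lam (σ i) ^ 2 * c i)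
          fun σ => sum_nonneg fun i _ => mul_nonneg (sq_nonneg _) (hc i)
    _ ≤ √(n * (n * Y)) := by gcongr
    _ = n * √Y := by
        rw [← mul_assoc, Real.sqrt_mul (mul_self_nonneg n), Real.sqrt_mul_self (by positivity)]

lemma F_comp_perm {k : ℕ} {ζ : ((Fin k → Bool) × (Fin k → Bool)) → ℝ} (hex : Exchangeable ζ)
    (lam : Fin k → ℝ) (σ : Perm (Fin k)) : F ζ (lam ∘ σ) = F ζ lam := by
  let relabel : Perm ((Fin k → Bool) × (Fin k → Bool)) :=
    (arrowCongr σ.symm (Equiv.refl Bool)).prodCongr (arrowCongr σ.symm (Equiv.refl Bool))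
  rw [F, ← Equiv.sum_comp relabel]
  refine sum_congr rfl fun p _ => ?_
  change ζ (p.1 ∘ σ, p.2 ∘ σ) * √(∑ i, lam (σ i) ^ 2 * if p.1 (σ i) ≠ p.2 (σ i) then 1 else 0) = _
  rw [hex σ p, Equiv.sum_comp σ fun j => lam j ^ 2 * if p.1 j ≠ p.2 j then 1 else 0]

theorem uniform_profile_maximizes_general
    (k : ℕ) (R : ℝ)
    (ζ : ((Fin k → Bool) × (Fin k → Bool)) → ℝ)
    (hζ0 : ∀ p, 0 ≤ ζ p)
    (hex : Exchangeable ζ) :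
    ∀ lam : Fin k → ℝ, (∑ i, (lam i) ^ 2) ≤ R ^ 2 →
      F ζ lam ≤ F ζ (fun _ => R / Real.sqrt k) := by
  intro lam hlam
  set n : ℝ := (Fintype.card (Perm (Fin k)) : ℝ)
  have hn : 0 < n := Nat.cast_pos.2 Fintype.card_pos
  refine le_of_mul_le_mul_left ?_ hn
  calc n * F ζ lam = ∑ σ : Perm (Fin k), F ζ (lam ∘ σ) := by simp [F_comp_perm hex, n]
    _ = ∑ p, ζ p * ∑ σ : Perm (Fin k),
          √(∑ i, lam (σ i) ^ 2 * if p.1 i ≠ p.2 i then 1 else 0) := by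
        simp only [F, Function.comp_apply, mul_sum]
        exact sum_comm
    _ ≤ ∑ p, ζ p * (n * √(∑ i, (R / √k) ^ 2 * if p.1 i ≠ p.2 i then 1 else 0)) := by
        gcongr with p
        · exact hζ0 p
        · simpa only [Fintype.card_fin] using sum_perm_sqrt_le
            (c := fun i => if p.1 i ≠ p.2 i then 1 else 0) (fun i => by positivity) hlam
    _ = n * F ζ (fun _ => R / √k) := by
        simp only [F, mul_sum]
        exact sum_congr rfl fun p _ => mul_left_comm _ _ _

/-- Lemma D.1 (optimality of the uniform singular-value profile): if `ζ` is
exchangeable, the uniform vector `λ*_i = R/√k` maximizes `F` over the Euclidean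
ball of radius `R`. -/
theorem uniform_profile_maximizes
    (k : ℕ) (hk : 1 ≤ k) (R : ℝ) (hR : 0 ≤ R)
    (ζ : ((Fin k → Bool) × (Fin k → Bool)) → ℝ)
    (hζ0 : ∀ p, 0 ≤ ζ p) (hζ1 : ∑ p, ζ p = 1)
    (hex : Exchangeable ζ) :
    ∀ lam : Fin k → ℝ, (∑ i, (lam i) ^ 2) ≤ R ^ 2 →
      F ζ lam ≤ F ζ (fun _ => R / Real.sqrt k) :=
  uniform_profile_maximizes_general k R ζ hζ0 hex
end

section
/- Optimal value of the finetuning objective under the fixed-distance assumption: If ζ is exchangeable and has fixed distance n, then the supremum over λ ∈ ℝ^k with Σ_i λ_i² ≤ R² of F(λ) equals R·√(n/k), and it is attained at the uniform vector λ* with λ*_i = R/√k for all i. (Hence in the linear case study the optimal averaged supervised loss equals −B·R·√(n_k/k_C), as used in Lemmas D.3 and D.4.) -/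
open scoped BigOperators

/-- `ζ` has fixed distance `n`: `ζ`-almost surely `z` and `z'` differ in exactly
`n` coordinates. -/
def FixedDistance {k : ℕ} (ζ : ((Fin k → Bool) × (Fin k → Bool)) → ℝ) (n : ℕ) : Prop :=
  ∀ p : (Fin k → Bool) × (Fin k → Bool), ζ p ≠ 0 →
    (Finset.univ.filter fun i => p.1 i ≠ p.2 i).card = n

/-!
By Jensen's inequality for the concave square root (weights `ζ`), `F(λ)² ≤ Σ_i λ_i² w_i`, where
`w_i` is the `ζ`-probability that coordinate `i` is flipped. Exchangeability makes all `w_i`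
equal, and fixed distance makes them sum to `n`, so `w_i = n/k` and `F(λ) ≤ √(n/k)·‖λ‖ ≤ R√(n/k)`.
At the uniform vector every pair in the support of `ζ` contributes exactly `R√(n/k)`.
-/

open Finset

section

variable {k : ℕ} (ζ : ((Fin k → Bool) × (Fin k → Bool)) → ℝ)

noncomputable def flipProb (i : Fin k) : ℝ :=
  ∑ p, ζ p * if p.1 i ≠ p.2 i then 1 else 0

variable {ζ}

lemma F_const {n : ℕ} (hfd : FixedDistance ζ n) (c : ℝ) :
    F ζ (fun _ => c) = |c| * Real.sqrt n * ∑ p, ζ p := by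
  rw [F, mul_sum]
  refine sum_congr rfl fun p _ => ?_
  by_cases hp : ζ p = 0
  · simp [hp]
  · rw [← mul_sum, sum_boole, hfd p hp, Real.sqrt_mul (sq_nonneg c), Real.sqrt_sq_eq_abs]
    ring

lemma flipProb_eq_of_exchangeable (hex : Exchangeable ζ) (i j : Fin k) :
    flipProb ζ i = flipProb ζ j := by
  let τ : (Fin k → Bool) ≃ (Fin k → Bool) := (Equiv.swap i j).arrowCongr (Equiv.refl Bool)
  refine Fintype.sum_equiv (τ.prodCongr τ) _ _ fun p => ?_
  have hτ : (τ.prodCongr τ) p = (p.1 ∘ Equiv.swap i j, p.2 ∘ Equiv.swap i j) := by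
    ext x <;> simp [τ, Equiv.arrowCongr, Equiv.symm_swap]
  rw [hτ, hex]
  simp

lemma sum_flipProb {n : ℕ} (hfd : FixedDistance ζ n) :
    ∑ i, flipProb ζ i = n * ∑ p, ζ p := by
  simp only [flipProb]
  rw [sum_comm, mul_sum]
  refine sum_congr rfl fun p _ => ?_
  by_cases hp : ζ p = 0
  · simp [hp]
  · rw [← mul_sum, sum_boole, hfd p hp, mul_comm]

lemma flipProb_eq {n : ℕ} (hex : Exchangeable ζ) (hfd : FixedDistance ζ n)
    (hζ1 : ∑ p, ζ p = 1) (i : Fin k) : flipProb ζ i = n / k := by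
  have hsum : (k : ℝ) * flipProb ζ i = n := by
    simpa [flipProb_eq_of_exchangeable hex _ i, hζ1] using sum_flipProb hfd
  have hk : (k : ℝ) ≠ 0 := Nat.cast_ne_zero.mpr (Fin.pos i).ne'
  rw [← hsum, mul_div_cancel_left₀ _ hk]

lemma F_le_sqrt_sum_sq_mul_flipProb (hζ0 : ∀ p, 0 ≤ ζ p) (hζ1 : ∑ p, ζ p = 1)
    (lam : Fin k → ℝ) : F ζ lam ≤ Real.sqrt (∑ i, lam i ^ 2 * flipProb ζ i) := by
  have hjensen := Real.strictConcaveOn_sqrt.concaveOn.le_map_sum (t := univ)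
    (p := fun p => ∑ i, lam i ^ 2 * if p.1 i ≠ p.2 i then (1 : ℝ) else 0)
    (fun p _ => hζ0 p) hζ1 (fun p _ => Set.mem_Ici.mpr (sum_nonneg fun i _ => by positivity))
  simp only [smul_eq_mul] at hjensen
  refine hjensen.trans_eq (congrArg Real.sqrt ?_)
  simp only [flipProb, mul_sum]
  rw [sum_comm]
  exact sum_congr rfl fun _ _ => sum_congr rfl fun _ _ => by ring

end

theorem optimal_value_fixed_distance_general
    (k : ℕ) (R : ℝ) (hR : 0 ≤ R)
    (ζ : ((Fin k → Bool) × (Fin k → Bool)) → ℝ)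
    (hζ0 : ∀ p, 0 ≤ ζ p) (hζ1 : ∑ p, ζ p = 1)
    (hex : Exchangeable ζ)
    (n : ℕ) (hfd : FixedDistance ζ n) :
    F ζ (fun _ => R / Real.sqrt k) = R * Real.sqrt ((n : ℝ) / k) ∧
      ∀ lam : Fin k → ℝ, (∑ i, (lam i) ^ 2) ≤ R ^ 2 →
        F ζ lam ≤ R * Real.sqrt ((n : ℝ) / k) := by
  refine ⟨?_, fun lam hlam => ?_⟩
  · rw [F_const hfd, hζ1, abs_of_nonneg (by positivity), Real.sqrt_div' _ k.cast_nonneg]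
    ring
  · calc F ζ lam ≤ Real.sqrt (∑ i, lam i ^ 2 * flipProb ζ i) :=
          F_le_sqrt_sum_sq_mul_flipProb hζ0 hζ1 lam
      _ = Real.sqrt ((n : ℝ) / k * ∑ i, lam i ^ 2) := by
          simp only [flipProb_eq hex hfd hζ1, mul_sum, mul_comm]
      _ ≤ Real.sqrt ((n : ℝ) / k * R ^ 2) := by gcongr
      _ = R * Real.sqrt ((n : ℝ) / k) := by
          rw [Real.sqrt_mul (by positivity), Real.sqrt_sq hR, mul_comm]

/-- Optimal value of the finetuning objective under the fixed-distance assumption: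
the supremum of `F` over the ball of radius `R` equals `R·√(n/k)` and is attained
at the uniform vector `λ*_i = R/√k`. -/
theorem optimal_value_fixed_distance
    (k : ℕ) (hk : 1 ≤ k) (R : ℝ) (hR : 0 ≤ R)
    (ζ : ((Fin k → Bool) × (Fin k → Bool)) → ℝ)
    (hζ0 : ∀ p, 0 ≤ ζ p) (hζ1 : ∑ p, ζ p = 1)
    (hex : Exchangeable ζ)
    (n : ℕ) (hn1 : 1 ≤ n) (hnk : n ≤ k) (hfd : FixedDistance ζ n) :
    F ζ (fun _ => R / Real.sqrt k) = R * Real.sqrt ((n : ℝ) / k) ∧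
      ∀ lam : Fin k → ℝ, (∑ i, (lam i) ^ 2) ≤ R ^ 2 →
        F ζ lam ≤ R * Real.sqrt ((n : ℝ) / k) :=
  optimal_value_fixed_distance_general k R hR ζ hζ0 hζ1 hex n hfd
end

section
/- Lemma D.3 (degenerate diversity when the finetuning tasks do not cover a target feature, quantitative form): Assume R > 0 and that ζ is exchangeable with fixed distance n. Then for every ε > 0 there exist t ∈ (0, R] and λ ∈ ℝ^k with t² + Σ_i λ_i² ≤ R² such that 0 ≤ R·√(n/k) − F(λ) ≤ ε·t. (When the target task depends on an extra feature direction, carrying weight t, that is not covered by the finetuning tasks, the ratio between the averaged representation difference R·√(n/k) − F(λ) and the worst-case representation difference t can be made arbitrarily small; hence the diversity parameter ν tends to 0.) -/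
open scoped BigOperators

set_option maxHeartbeats 1000000 in
/-- Lemma D.3 (degenerate diversity when the finetuning tasks do not cover a
target feature, quantitative form): the ratio between the averaged representation
difference `R·√(n/k) − F(λ)` and the worst-case one `t` can be made arbitrarily
small, so the diversity parameter ν tends to 0. -/
theorem degenerate_diversity
    (k : ℕ) (hk : 1 ≤ k) (R : ℝ) (hR : 0 < R)
    (ζ : ((Fin k → Bool) × (Fin k → Bool)) → ℝ)
    (hζ0 : ∀ p, 0 ≤ ζ p) (hζ1 : ∑ p, ζ p = 1)
    (hex : Exchangeable ζ)
    (n : ℕ) (hn1 : 1 ≤ n) (hnk : n ≤ k) (hfd : FixedDistance ζ n) :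
    ∀ ε : ℝ, 0 < ε →
      ∃ (t : ℝ) (lam : Fin k → ℝ),
        0 < t ∧ t ≤ R ∧
        t ^ 2 + (∑ i, (lam i) ^ 2) ≤ R ^ 2 ∧
        0 ≤ R * Real.sqrt ((n : ℝ) / k) - F ζ lam ∧
        R * Real.sqrt ((n : ℝ) / k) - F ζ lam ≤ ε * t := by
  intro ε hε
  have hk0 : (0:ℝ) < k := by exact_mod_cast Nat.lt_of_lt_of_le Nat.zero_lt_one hk
  set m := min ε 1 with hm
  have hm0 : 0 < m := lt_min hε one_pos
  have hm1 : m ≤ 1 := min_le_right _ _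
  have hmε : m ≤ ε := min_le_left _ _
  set t := R * m / 2 with htdef
  have ht0 : 0 < t := by positivity
  have htR : t ≤ R := by nlinarith
  have ht2 : t ^ 2 < R ^ 2 := by nlinarith
  set s := Real.sqrt ((R ^ 2 - t ^ 2) / k) with hsdef
  have hs0 : 0 ≤ s := Real.sqrt_nonneg _
  have hs2 : s ^ 2 = (R ^ 2 - t ^ 2) / k := by
    rw [hsdef, Real.sq_sqrt]
    apply div_nonneg (by nlinarith) hk0.le
  refine ⟨t, fun _ => s, ht0, htR, ?_, ?_⟩
  · have : ∑ _i : Fin k, s ^ 2 = (k : ℝ) * s ^ 2 := by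
      simp [Finset.sum_const, mul_comm]
    rw [this, hs2]
    field_simp
    linarith
  · -- compute F
    have hF : F ζ (fun _ => s) = Real.sqrt (s ^ 2 * n) := by
      unfold F
      have hterm : ∀ p : (Fin k → Bool) × (Fin k → Bool),
          ζ p * Real.sqrt (∑ i, s ^ 2 * (if p.1 i ≠ p.2 i then 1 else 0))
            = ζ p * Real.sqrt (s ^ 2 * n) := by
        intro p
        by_cases hp : ζ p = 0
        · simp [hp]
        · have hcard := hfd p hp
          have : (∑ i, s ^ 2 * (if p.1 i ≠ p.2 i then (1:ℝ) else 0)) = s ^ 2 * n := by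
            rw [← Finset.mul_sum, Finset.sum_boole, hcard]
          rw [this]
      calc (∑ p : (Fin k → Bool) × (Fin k → Bool),
              ζ p * Real.sqrt (∑ i, s ^ 2 * (if p.1 i ≠ p.2 i then 1 else 0)))
          = ∑ p : (Fin k → Bool) × (Fin k → Bool), ζ p * Real.sqrt (s ^ 2 * n) := by
            exact Finset.sum_congr rfl fun p _ => hterm p
        _ = (∑ p : (Fin k → Bool) × (Fin k → Bool), ζ p) * Real.sqrt (s ^ 2 * n) := by
            rw [← Finset.sum_mul]
        _ = Real.sqrt (s ^ 2 * n) := by rw [hζ1, one_mul]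
    have hFval : F ζ (fun _ => s) = Real.sqrt (R ^ 2 - t ^ 2) * Real.sqrt ((n : ℝ) / k) := by
      rw [hF, hs2]
      rw [show (R ^ 2 - t ^ 2) / (k : ℝ) * (n : ℝ) = (R ^ 2 - t ^ 2) * ((n : ℝ) / k) by ring]
      rw [Real.sqrt_mul (by nlinarith)]
    set u := Real.sqrt (R ^ 2 - t ^ 2) with hudef
    have hu0 : 0 ≤ u := Real.sqrt_nonneg _
    have hu2 : u ^ 2 = R ^ 2 - t ^ 2 := Real.sq_sqrt (by nlinarith)
    have huR : u ≤ R := by nlinarith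
    set q := Real.sqrt ((n : ℝ) / k) with hqdef
    have hq0 : 0 ≤ q := Real.sqrt_nonneg _
    have hq1 : q ≤ 1 := by
      rw [hqdef, show (1:ℝ) = Real.sqrt 1 by simp]
      apply Real.sqrt_le_sqrt
      rw [div_le_one hk0]
      exact_mod_cast hnk
    rw [hFval]
    constructor
    · nlinarith
    · -- R*q - u*q = q*(R-u) ≤ (R-u) ≤ t^2/R ≤ ε*t
      have h1 : R * (R - u) ≤ t ^ 2 := by nlinarith
      have h2 : R - u ≤ t ^ 2 / R := by
        rw [le_div_iff₀ hR]; nlinarith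
      have h3 : t ^ 2 / R ≤ ε * t := by
        rw [div_le_iff₀ hR]
        have : t ≤ ε * R := by
          rw [htdef]; nlinarith
        nlinarith
      nlinarith [mul_nonneg hq0 (sub_nonneg.2 huR)]
end

section
/- Exact conditional decomposition used in the proof of Lemma D.4: Assume ζ is exchangeable with fixed distance n. Then for every index ĩ ∈ {1,…,k} and all reals a ≥ 0 and c ≥ 0: Σ_{(z,z')} ζ(z,z')·sqrt( a²·1[z_ĩ ≠ z'_ĩ] + c²·Σ_{i ≠ ĩ} 1[z_i ≠ z'_i] ) = (n/k)·sqrt( a² + c²·(n−1) ) + ((k−n)/k)·c·√n. -/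
open Finset

section Disagreement

variable {k : ℕ}

def disagree (i : Fin k) (p : (Fin k → Bool) × (Fin k → Bool)) : ℝ :=
  if p.1 i ≠ p.2 i then 1 else 0

theorem sum_disagree (p : (Fin k → Bool) × (Fin k → Bool)) :
    ∑ i, disagree i p = (univ.filter fun i => p.1 i ≠ p.2 i).card := by
  simp only [disagree, sum_boole]

variable {ζ : ((Fin k → Bool) × (Fin k → Bool)) → ℝ}

theorem FixedDistance.sum_disagree_eq {n : ℕ} (hfd : FixedDistance ζ n)
    {p : (Fin k → Bool) × (Fin k → Bool)} (hp : ζ p ≠ 0) :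
    ∑ i, disagree i p = n := by
  rw [sum_disagree, hfd p hp]

theorem FixedDistance.sum_erase_disagree_eq {n : ℕ} (hfd : FixedDistance ζ n) (i : Fin k)
    {p : (Fin k → Bool) × (Fin k → Bool)} (hp : ζ p ≠ 0) :
    ∑ j ∈ univ.erase i, disagree j p = n - disagree i p := by
  rw [← hfd.sum_disagree_eq hp, ← add_sum_erase _ _ (mem_univ i), add_sub_cancel_left]

theorem Exchangeable.sum_mul_disagree_eq (hex : Exchangeable ζ) (i j : Fin k) :
    ∑ p, ζ p * disagree i p = ∑ p, ζ p * disagree j p := by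
  let σ := Equiv.swap i j
  let e : (Fin k → Bool) × (Fin k → Bool) ≃ (Fin k → Bool) × (Fin k → Bool) :=
    (Equiv.arrowCongr σ (Equiv.refl Bool)).prodCongr (Equiv.arrowCongr σ (Equiv.refl Bool))
  refine Fintype.sum_equiv e _ _ fun p => ?_
  have he : e p = (p.1 ∘ σ, p.2 ∘ σ) := by
    ext x <;> simp [e, σ, Equiv.symm_swap]
  rw [he, hex σ p]
  simp [disagree, σ]

theorem FixedDistance.sum_sum_mul_disagree {n : ℕ} (hfd : FixedDistance ζ n)
    (hζ1 : ∑ p, ζ p = 1) :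
    ∑ i, ∑ p, ζ p * disagree i p = n := by
  have hterm : ∀ p, ∑ i, ζ p * disagree i p = ζ p * n := fun p => by
    rcases eq_or_ne (ζ p) 0 with hp | hp
    · simp [hp]
    · rw [← mul_sum, hfd.sum_disagree_eq hp]
  rw [sum_comm, sum_congr rfl fun p _ => hterm p, ← sum_mul, hζ1, one_mul]

theorem sum_mul_disagree_eq_div (hex : Exchangeable ζ) {n : ℕ} (hfd : FixedDistance ζ n)
    (hζ1 : ∑ p, ζ p = 1) (i : Fin k) :
    ∑ p, ζ p * disagree i p = n / k := by
  have hk : (k : ℝ) ≠ 0 := Nat.cast_ne_zero.mpr (Fin.pos i).ne'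
  rw [eq_div_iff hk, ← hfd.sum_sum_mul_disagree hζ1,
    sum_congr rfl fun j _ => hex.sum_mul_disagree_eq j i, sum_const, card_univ,
    Fintype.card_fin, nsmul_eq_mul, mul_comm]

end Disagreement

theorem sqrt_sq_mul_ite_add_sq_mul_sub_ite (P : Prop) [Decidable P] {a c : ℝ} (hc : 0 ≤ c) (n : ℝ) :
    Real.sqrt (a ^ 2 * (if P then 1 else 0) + c ^ 2 * (n - if P then 1 else 0)) =
      if P then Real.sqrt (a ^ 2 + c ^ 2 * (n - 1)) else c * Real.sqrt n := by
  split_ifs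
  · simp
  · rw [mul_zero, zero_add, sub_zero, Real.sqrt_mul (sq_nonneg c), Real.sqrt_sq hc]

theorem sum_mul_ite_eq_of_sum_eq_one {α : Type*} [Fintype α] {w : α → ℝ} (hw : ∑ x, w x = 1)
    (P : α → Prop) [DecidablePred P] (A B : ℝ) :
    ∑ x, w x * (if P x then A else B) =
      (∑ x, w x * (if P x then 1 else 0)) * A +
        (1 - ∑ x, w x * (if P x then 1 else 0)) * B := by
  have hterm : ∀ x, w x * (if P x then A else B) =
      w x * (if P x then 1 else 0) * A + (w x - w x * (if P x then 1 else 0)) * B := fun x => by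
    split_ifs <;> ring
  simp only [hterm, sum_add_distrib, ← sum_mul, sum_sub_distrib, hw]

theorem conditional_decomposition_general
    (k : ℕ)
    (ζ : ((Fin k → Bool) × (Fin k → Bool)) → ℝ)
    (hζ1 : ∑ p, ζ p = 1)
    (hex : Exchangeable ζ)
    (n : ℕ) (hfd : FixedDistance ζ n) :
    ∀ itil : Fin k, ∀ a c : ℝ, 0 ≤ a → 0 ≤ c →
      (∑ p : (Fin k → Bool) × (Fin k → Bool),
          ζ p * Real.sqrt (a ^ 2 * (if p.1 itil ≠ p.2 itil then 1 else 0) +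
            c ^ 2 * ∑ i ∈ Finset.univ.erase itil,
              (if p.1 i ≠ p.2 i then (1 : ℝ) else 0))) =
        ((n : ℝ) / k) * Real.sqrt (a ^ 2 + c ^ 2 * ((n : ℝ) - 1)) +
          (((k : ℝ) - n) / k) * (c * Real.sqrt n) := by
  intro itil a c _ hc
  have hterm : ∀ p, ζ p * Real.sqrt (a ^ 2 * (if p.1 itil ≠ p.2 itil then 1 else 0) +
        c ^ 2 * ∑ i ∈ univ.erase itil, (if p.1 i ≠ p.2 i then (1 : ℝ) else 0)) =
      ζ p * (if p.1 itil ≠ p.2 itil then Real.sqrt (a ^ 2 + c ^ 2 * ((n : ℝ) - 1))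
        else c * Real.sqrt n) := fun p => by
    rcases eq_or_ne (ζ p) 0 with hp | hp
    · simp [hp]
    · have hrest := hfd.sum_erase_disagree_eq itil hp
      unfold disagree at hrest
      rw [hrest, sqrt_sq_mul_ite_add_sq_mul_sub_ite _ hc]
  have hprob := sum_mul_disagree_eq_div hex hfd hζ1 itil
  unfold disagree at hprob
  have hk : (k : ℝ) ≠ 0 := Nat.cast_ne_zero.mpr (Fin.pos itil).ne'
  rw [sum_congr rfl fun p _ => hterm p, sum_mul_ite_eq_of_sum_eq_one hζ1, hprob]
  field_simp

/-- Exact conditional decomposition used in the proof of Lemma D.4. -/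
theorem conditional_decomposition
    (k : ℕ) (hk : 1 ≤ k)
    (ζ : ((Fin k → Bool) × (Fin k → Bool)) → ℝ)
    (hζ0 : ∀ p, 0 ≤ ζ p) (hζ1 : ∑ p, ζ p = 1)
    (hex : Exchangeable ζ)
    (n : ℕ) (hn1 : 1 ≤ n) (hnk : n ≤ k) (hfd : FixedDistance ζ n) :
    ∀ itil : Fin k, ∀ a c : ℝ, 0 ≤ a → 0 ≤ c →
      (∑ p : (Fin k → Bool) × (Fin k → Bool),
          ζ p * Real.sqrt (a ^ 2 * (if p.1 itil ≠ p.2 itil then 1 else 0) +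
            c ^ 2 * ∑ i ∈ Finset.univ.erase itil,
              (if p.1 i ≠ p.2 i then (1 : ℝ) else 0))) =
        ((n : ℝ) / k) * Real.sqrt (a ^ 2 + c ^ 2 * ((n : ℝ) - 1)) +
          (((k : ℝ) - n) / k) * (c * Real.sqrt n) :=
  conditional_decomposition_general k ζ hζ1 hex n hfd
end
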